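/- Let W be BKR-decomposable with corresponding H_t. Then H_0 is integrable if and only if W³ is integrable. More precisely, (1/2)W³ − W = i·H_0 + (1/2)∑_{j∈J} X_j W_j² + ∑_{j∈J}∑_{k∈N_j}(X_j Z_{jk} − E[X_j Z_{jk}])·W_{jk}, and the expectations of the last two sums exist by the independence assumptions. -/

import Mathlib

/-!
At `t = 0` the series `R_l` reduce to `1/l!`, so `H_0 = i·G` with `G` real and polynomial in the
decomposition. Substituting `W = W_j + Z_j` and `W_j = W_{jk} + V_{jk}`, the sum of `−G` and the
two remainder sums collapses to `(1/2)W³ − c·W` with `c = ∑_j ∑_k E[X_j Z_{jk}]`, and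
`c = E[W²] = 1` because `E[X_j W_j] = E[W_j]E[X_j] = 0`. Independence also makes both remainder
sums integrable, so `H_0` and `W³` differ by integrable terms.
-/

open MeasureTheory ProbabilityTheory

/-- `R l z = ∑_{m=0}^∞ (iz)^m / (m+l)!`. -/
noncomputable def R (l : ℕ) (z : ℝ) : ℂ :=
  ∑' m : ℕ, (Complex.I * z) ^ m / ((m + l).factorial : ℂ)

/-- The process `H_t` associated with a BKR-decomposition. -/
noncomputable def bkrH {Ω J : Type*} [MeasurableSpace Ω] [Fintype J]
    (μ : Measure Ω) (N : J → Finset J)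
    (X Z : J → Ω → ℝ) (Zjk Vjk : J → J → Ω → ℝ) (t : ℝ) (ω : Ω) : ℂ :=
  Complex.I * ∑ j, ((X j ω * (Z j ω) ^ 2 : ℝ) : ℂ) * R 2 (-(t * Z j ω))
    - Complex.I * ∑ j, ∑ k ∈ N j,
        ((X j ω * Zjk j k ω - ∫ ω', X j ω' * Zjk j k ω' ∂μ : ℝ) : ℂ)
          * ((Z j ω + Vjk j k ω : ℝ) : ℂ) * R 1 (-(t * (Z j ω + Vjk j k ω)))

open Finset Complex

lemma R_zero (l : ℕ) : R l 0 = 1 / (l.factorial : ℂ) := by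
  rw [R, tsum_eq_single 0 fun m hm => by simp [zero_pow hm]]
  simp

lemma integrable_ofReal_iff {Ω 𝕜 : Type*} [MeasurableSpace Ω] [RCLike 𝕜] {μ : Measure Ω}
    {f : Ω → ℝ} : Integrable (fun ω => (f ω : 𝕜)) μ ↔ Integrable f μ :=
  ⟨fun h => by simpa using h.re, Integrable.ofReal⟩

noncomputable def bkrH0Im {Ω J : Type*} [MeasurableSpace Ω] [Fintype J]
    (μ : Measure Ω) (N : J → Finset J)
    (X Z : J → Ω → ℝ) (Zjk Vjk : J → J → Ω → ℝ) (ω : Ω) : ℝ :=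
  1 / 2 * ∑ j, X j ω * Z j ω ^ 2
    - ∑ j, ∑ k ∈ N j, (X j ω * Zjk j k ω - ∫ ω', X j ω' * Zjk j k ω' ∂μ) * (Z j ω + Vjk j k ω)

section H0

variable {Ω J : Type*} [MeasurableSpace Ω] [Fintype J] (μ : Measure Ω) (N : J → Finset J)
  (X Z : J → Ω → ℝ) (Zjk Vjk : J → J → Ω → ℝ)

lemma bkrH_zero (ω : Ω) :
    bkrH μ N X Z Zjk Vjk 0 ω = I * bkrH0Im μ N X Z Zjk Vjk ω := by
  have hR1 : R 1 0 = 1 := by simp [R_zero]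
  have hR2 : R 2 0 = 1 / 2 := by simp [R_zero, Nat.factorial]
  simp only [bkrH, bkrH0Im, zero_mul, neg_zero, hR1, hR2, mul_one]
  push_cast
  rw [← sum_mul]
  ring

lemma integrable_bkrH_zero_iff :
    Integrable (bkrH μ N X Z Zjk Vjk 0) μ ↔ Integrable (bkrH0Im μ N X Z Zjk Vjk) μ := by
  rw [funext (bkrH_zero μ N X Z Zjk Vjk),
    integrable_const_mul_iff (isUnit_iff_ne_zero.2 I_ne_zero)]
  exact integrable_ofReal_iff

end H0

-- `m j k` stands for `E[X_j Z_{jk}]`, whose double sum is `E[W²] = 1`.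
lemma bkr_cubic_identity {J : Type*} (s : Finset J) (N : J → Finset J) (w : ℝ)
    (x wj z : J → ℝ) (zjk wjk vjk m : J → J → ℝ) (hw : w = ∑ j ∈ s, x j)
    (hdec1 : ∀ j ∈ s, w = wj j + z j) (hz : ∀ j ∈ s, z j = ∑ k ∈ N j, zjk j k)
    (hdec2 : ∀ j ∈ s, ∀ k ∈ N j, wj j = wjk j k + vjk j k)
    (hm : ∑ j ∈ s, ∑ k ∈ N j, m j k = 1) :
    1 / 2 * w ^ 3 - w =
      -(1 / 2 * ∑ j ∈ s, x j * z j ^ 2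
          - ∑ j ∈ s, ∑ k ∈ N j, (x j * zjk j k - m j k) * (z j + vjk j k))
        + 1 / 2 * ∑ j ∈ s, x j * wj j ^ 2
        + ∑ j ∈ s, ∑ k ∈ N j, (x j * zjk j k - m j k) * wjk j k := by
  have hinner : ∀ j ∈ s, ∑ k ∈ N j, (x j * zjk j k - m j k) * (z j + vjk j k)
      + ∑ k ∈ N j, (x j * zjk j k - m j k) * wjk j k
      = x j * z j * w - (∑ k ∈ N j, m j k) * w := by
    intro j hj
    calc _ = ∑ k ∈ N j, (x j * zjk j k - m j k) * w := by
          rw [← sum_add_distrib]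
          refine sum_congr rfl fun k hk => ?_
          rw [hdec1 j hj, hdec2 j hj k hk]
          ring
      _ = _ := by rw [hz j hj, ← sub_mul, mul_sum, ← sum_sub_distrib, sum_mul]
  have houter : ∑ j ∈ s, ∑ k ∈ N j, (x j * zjk j k - m j k) * (z j + vjk j k)
      + ∑ j ∈ s, ∑ k ∈ N j, (x j * zjk j k - m j k) * wjk j k
      = (∑ j ∈ s, x j * z j) * w - w := by
    rw [← sum_add_distrib, sum_congr rfl hinner, sum_sub_distrib, ← sum_mul, ← sum_mul, hm,
      one_mul]
  have hsq : ∑ j ∈ s, x j * wj j ^ 2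
      = (∑ j ∈ s, x j) * w ^ 2 - 2 * (∑ j ∈ s, x j * z j) * w + ∑ j ∈ s, x j * z j ^ 2 := by
    rw [sum_mul, mul_sum, sum_mul, ← sum_sub_distrib, ← sum_add_distrib]
    refine sum_congr rfl fun j hj => ?_
    rw [show wj j = w - z j by linarith [hdec1 j hj]]
    ring
  rw [hsq, ← hw]
  linear_combination -houter

lemma sum_integral_mul_Zjk_eq_integral_sq {Ω J : Type*} [MeasurableSpace Ω] [Fintype J]
    {μ : Measure Ω} (N : J → Finset J) (W : Ω → ℝ) (X Wj Z : J → Ω → ℝ)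
    (Zjk : J → J → Ω → ℝ) (hX2 : ∀ j, MemLp (X j) 2 μ) (hWj2 : ∀ j, MemLp (Wj j) 2 μ)
    (hZjk2 : ∀ j k, MemLp (Zjk j k) 2 μ) (hW : ∀ ω, W ω = ∑ j, X j ω)
    (hXmean : ∀ j, ∫ ω, X j ω ∂μ = 0) (hdec1 : ∀ j ω, W ω = Wj j ω + Z j ω)
    (hZdef : ∀ j ω, Z j ω = ∑ k ∈ N j, Zjk j k ω) (hindep1 : ∀ j, IndepFun (Wj j) (X j) μ) :
    ∑ j, ∑ k ∈ N j, ∫ ω, X j ω * Zjk j k ω ∂μ = ∫ ω, W ω ^ 2 ∂μ := by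
  have hXWj_zero : ∀ j, ∫ ω, X j ω * Wj j ω ∂μ = 0 := fun j => by
    simp_rw [mul_comm (X j _)]
    rw [(hindep1 j).integral_fun_mul_eq_mul_integral (hWj2 j).aestronglyMeasurable
      (hX2 j).aestronglyMeasurable, hXmean j, mul_zero]
  have hsq : ∀ ω, W ω ^ 2 = ∑ j, (X j ω * Wj j ω + ∑ k ∈ N j, X j ω * Zjk j k ω) := fun ω => by
    rw [sq]
    nth_rw 1 [hW ω]
    rw [sum_mul]
    refine sum_congr rfl fun j _ => ?_
    rw [hdec1 j ω, hZdef j ω, mul_add, mul_sum]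
  have hXZjk : ∀ j k, Integrable (fun ω => X j ω * Zjk j k ω) μ :=
    fun j k => (hX2 j).integrable_mul (hZjk2 j k)
  have hXZj : ∀ j, Integrable (fun ω => ∑ k ∈ N j, X j ω * Zjk j k ω) μ :=
    fun j => integrable_finsetSum _ fun k _ => hXZjk j k
  have hXWj : ∀ j, Integrable (fun ω => X j ω * Wj j ω) μ :=
    fun j => (hX2 j).integrable_mul (hWj2 j)
  have hterm : ∀ j, Integrable (fun ω => X j ω * Wj j ω + ∑ k ∈ N j, X j ω * Zjk j k ω) μ :=
    fun j => (hXWj j).add (hXZj j)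
  rw [funext hsq, integral_finsetSum _ fun j _ => hterm j]
  refine sum_congr rfl fun j _ => ?_
  rw [integral_add (hXWj j) (hXZj j), hXWj_zero j, zero_add,
    integral_finsetSum _ fun k _ => hXZjk j k]

namespace ProbabilityTheory

variable {Ω : Type*} [MeasurableSpace Ω] {μ : Measure Ω}

lemma IndepFun.integrable_mul_sq {X Y : Ω → ℝ} (h : IndepFun Y X μ) (hY : MemLp Y 2 μ)
    (hX : Integrable X μ) : Integrable (fun ω => X ω * Y ω ^ 2) μ := by
  have hsq : IndepFun (fun ω => Y ω ^ 2) X μ := h.comp (measurable_id.pow_const 2) measurable_id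
  exact hsq.symm.integrable_mul hX hY.integrable_sq

lemma IndepFun.integrable_mul_sub_const_mul [IsFiniteMeasure μ] {X Y V : Ω → ℝ} (c : ℝ)
    (h : IndepFun V (fun ω => (X ω, Y ω)) μ) (hX : MemLp X 2 μ) (hY : MemLp Y 2 μ)
    (hV : Integrable V μ) : Integrable (fun ω => (X ω * Y ω - c) * V ω) μ := by
  have hφ : Measurable fun p : ℝ × ℝ => p.1 * p.2 - c :=
    (measurable_fst.mul measurable_snd).sub measurable_const
  exact (h.comp measurable_id hφ).symm.integrable_mul
    ((hX.integrable_mul hY).sub (integrable_const c)) hV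

end ProbabilityTheory

theorem bkr_H0_integrable_iff_W3_general
    {Ω J : Type*} [MeasurableSpace Ω] [Fintype J]
    (μ : Measure Ω) [IsProbabilityMeasure μ]
    (N : J → Finset J) (W : Ω → ℝ) (X Wj Z : J → Ω → ℝ)
    (Zjk Wjk Vjk : J → J → Ω → ℝ)
    (hW2 : MemLp W 2 μ) (hX2 : ∀ j, MemLp (X j) 2 μ)
    (hWj2 : ∀ j, MemLp (Wj j) 2 μ)
    (hZjk2 : ∀ j k, MemLp (Zjk j k) 2 μ)
    (hWjk2 : ∀ j k, MemLp (Wjk j k) 2 μ)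
    (hW : ∀ ω, W ω = ∑ j, X j ω)
    (hXmean : ∀ j, ∫ ω, X j ω ∂μ = 0)
    (hWnorm : ∫ ω, (W ω) ^ 2 ∂μ = 1)
    (hdec1 : ∀ j ω, W ω = Wj j ω + Z j ω)
    (hZdef : ∀ j ω, Z j ω = ∑ k ∈ N j, Zjk j k ω)
    (hdec2 : ∀ j, ∀ k ∈ N j, ∀ ω, Wj j ω = Wjk j k ω + Vjk j k ω)
    (hindep1 : ∀ j, IndepFun (Wj j) (X j) μ)
    (hindep2 : ∀ j, ∀ k ∈ N j, IndepFun (Wjk j k) (fun ω => (X j ω, Zjk j k ω)) μ) :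
    (Integrable (bkrH μ N X Z Zjk Vjk 0) μ ↔ Integrable (fun ω => (W ω) ^ 3) μ) ∧
      ∀ ω, (((1 / 2) * (W ω) ^ 3 - W ω : ℝ) : ℂ) =
        Complex.I * bkrH μ N X Z Zjk Vjk 0 ω
          + (((1 / 2) * ∑ j, X j ω * (Wj j ω) ^ 2 : ℝ) : ℂ)
          + ((∑ j, ∑ k ∈ N j,
              (X j ω * Zjk j k ω - ∫ ω', X j ω' * Zjk j k ω' ∂μ) * Wjk j k ω : ℝ) : ℂ) := by
  have hm := sum_integral_mul_Zjk_eq_integral_sq N W X Wj Z Zjk hX2 hWj2 hZjk2 hW hXmean hdec1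
    hZdef hindep1
  rw [hWnorm] at hm
  have key : ∀ ω, 1 / 2 * W ω ^ 3 - W ω = -bkrH0Im μ N X Z Zjk Vjk ω
      + 1 / 2 * ∑ j, X j ω * Wj j ω ^ 2
      + ∑ j, ∑ k ∈ N j, (X j ω * Zjk j k ω - ∫ ω', X j ω' * Zjk j k ω' ∂μ) * Wjk j k ω :=
    fun ω => bkr_cubic_identity univ N (W ω) (X · ω) (Wj · ω) (Z · ω) (Zjk · · ω) (Wjk · · ω)
      (Vjk · · ω) _ (hW ω) (fun j _ => hdec1 j ω) (fun j _ => hZdef j ω)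
      (fun j _ k hk => hdec2 j k hk ω) hm
  have hA : Integrable (fun ω => ∑ j, X j ω * Wj j ω ^ 2) μ :=
    integrable_finsetSum _ fun j _ =>
      (hindep1 j).integrable_mul_sq (hWj2 j) ((hX2 j).integrable one_le_two)
  have hB : Integrable (fun ω => ∑ j, ∑ k ∈ N j,
      (X j ω * Zjk j k ω - ∫ ω', X j ω' * Zjk j k ω' ∂μ) * Wjk j k ω) μ :=
    integrable_finsetSum _ fun j _ => integrable_finsetSum _ fun k hk =>
      (hindep2 j k hk).integrable_mul_sub_const_mul _ (hX2 j) (hZjk2 j k)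
        ((hWjk2 j k).integrable one_le_two)
  refine ⟨?_, fun ω => ?_⟩
  · rw [integrable_bkrH_zero_iff, ← integrable_neg_iff,
      ← integrable_add_iff_integrable_left' (hA.const_mul (1 / 2)),
      ← integrable_add_iff_integrable_left' hB]
    simp_rw [Pi.neg_apply, ← key, sub_eq_add_neg]
    rw [integrable_add_iff_integrable_left' (hW2.integrable one_le_two).fun_neg,
      integrable_const_mul_iff (by norm_num)]
  · rw [bkrH_zero, key ω]
    push_cast
    linear_combination (-bkrH0Im μ N X Z Zjk Vjk ω : ℂ) * I_sq

/-- For a BKR-decomposable `W`, `H_0` is integrable iff `W³` is; more precisely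
`(1/2)W³ − W = i·H_0 + (1/2)∑_j X_j W_j² + ∑_j∑_{k∈N_j}(X_jZ_{jk} − E[X_jZ_{jk}])W_{jk}`. -/
theorem bkr_H0_integrable_iff_W3
    {Ω J : Type*} [MeasurableSpace Ω] [Fintype J]
    (μ : Measure Ω) [IsProbabilityMeasure μ]
    (N : J → Finset J) (W : Ω → ℝ) (X Wj Z : J → Ω → ℝ)
    (Zjk Wjk Vjk : J → J → Ω → ℝ)
    (hW2 : MemLp W 2 μ) (hX2 : ∀ j, MemLp (X j) 2 μ)
    (hWj2 : ∀ j, MemLp (Wj j) 2 μ) (hZ2 : ∀ j, MemLp (Z j) 2 μ)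
    (hZjk2 : ∀ j k, MemLp (Zjk j k) 2 μ)
    (hWjk2 : ∀ j k, MemLp (Wjk j k) 2 μ)
    (hVjk2 : ∀ j k, MemLp (Vjk j k) 2 μ)
    (hW : ∀ ω, W ω = ∑ j, X j ω)
    (hXmean : ∀ j, ∫ ω, X j ω ∂μ = 0)
    (hWnorm : ∫ ω, (W ω) ^ 2 ∂μ = 1)
    (hdec1 : ∀ j ω, W ω = Wj j ω + Z j ω)
    (hZdef : ∀ j ω, Z j ω = ∑ k ∈ N j, Zjk j k ω)
    (hdec2 : ∀ j, ∀ k ∈ N j, ∀ ω, Wj j ω = Wjk j k ω + Vjk j k ω)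
    (hindep1 : ∀ j, IndepFun (Wj j) (X j) μ)
    (hindep2 : ∀ j, ∀ k ∈ N j, IndepFun (Wjk j k) (fun ω => (X j ω, Zjk j k ω)) μ) :
    (Integrable (bkrH μ N X Z Zjk Vjk 0) μ ↔ Integrable (fun ω => (W ω) ^ 3) μ) ∧
      ∀ ω, (((1 / 2) * (W ω) ^ 3 - W ω : ℝ) : ℂ) =
        Complex.I * bkrH μ N X Z Zjk Vjk 0 ω
          + (((1 / 2) * ∑ j, X j ω * (Wj j ω) ^ 2 : ℝ) : ℂ)
          + ((∑ j, ∑ k ∈ N j,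
              (X j ω * Zjk j k ω - ∫ ω', X j ω' * Zjk j k ω' ∂μ) * Wjk j k ω : ℝ) : ℂ) :=
  bkr_H0_integrable_iff_W3_general μ N W X Wj Z Zjk Wjk Vjk hW2 hX2 hWj2 hZjk2 hWjk2 hW hXmean
    hWnorm hdec1 hZdef hdec2 hindep1 hindep2
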